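/- Let A be an invertible upper-triangular real d×d matrix with real eigenvalues satisfying λ_i(A) ≠ λ_{i'}(A) for all i ≠ i'. Then the (d(d−1)/2)×(d(d−1)/2) matrix T_A = P_low (I ⊗ Aᵀ − A ⊗ I) P_lowᵀ is invertible; moreover, writing A = V diag(λ) V⁻¹ with V upper triangular, σ_min(T_A) ≥ (σ_min(V)/σ_max(V))² · min_{i<i'} |λ_i(A) − λ_{i'}(A)|. -/

import Mathlib

/-!
For `y`, the vector `Pᵀ y` is `vec X` for a strictly lower-triangular `X` with `‖X‖_F = ‖y‖`,
and `T_A y = P vec (Aᵀ X - X Aᵀ)`. Since `A` is upper triangular the commutator is again strictly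
lower-triangular, so `‖T_A y‖ = ‖Aᵀ X - X Aᵀ‖_F`. From `Aᵀ = V⁻ᵀ D Vᵀ` the commutator is
`V⁻ᵀ (D Y - Y D) Vᵀ` with `Y = Vᵀ X V⁻ᵀ`, still strictly lower-triangular because `V` and `V⁻¹`
are upper triangular. The entries of `D Y - Y D` are `(λᵢ - λⱼ) Yᵢⱼ`, so its Frobenius norm is at
least `min_{i<i'} |λᵢ - λᵢ'| · ‖Y‖_F`, and each of the four multiplications by `Vᵀ` or `V⁻ᵀ`
(on either side) scales the Frobenius norm by at least `σ_min(V)`, resp. `1 / σ_max(V)`.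
-/

open Matrix Kronecker BigOperators

noncomputable section

/-- Square real matrices. -/
abbrev Mat (d : ℕ) := Matrix (Fin d) (Fin d) ℝ

/-- Strictly lower-triangular part: `[low A]_{ij} = A_{ij}` if `i > j`, else `0`. -/
def lowPart {d : ℕ} (A : Mat d) : Mat d :=
  Matrix.of fun i j => if (j : ℕ) < (i : ℕ) then A i j else 0

/-- Frobenius norm. -/
def frob {m n : Type*} [Fintype m] [Fintype n] (A : Matrix m n ℝ) : ℝ :=
  Real.sqrt (∑ i, ∑ j, (A i j) ^ 2)

/-- Euclidean norm of a vector. -/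
def enorm {m : Type*} [Fintype m] (v : m → ℝ) : ℝ :=
  Real.sqrt (∑ i, (v i) ^ 2)

/-- Largest singular value. -/
def sigMax {m n : Type*} [Fintype m] [Fintype n] (A : Matrix m n ℝ) : ℝ :=
  sSup {r | ∃ x : n → ℝ, _root_.enorm x = 1 ∧ r = _root_.enorm (A.mulVec x)}

/-- Smallest singular value. -/
def sigMin {m n : Type*} [Fintype m] [Fintype n] (A : Matrix m n ℝ) : ℝ :=
  sInf {r | ∃ x : n → ℝ, _root_.enorm x = 1 ∧ r = _root_.enorm (A.mulVec x)}

/-- Spectral norm (largest singular value). -/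
def specNorm {m n : Type*} [Fintype m] [Fintype n] (A : Matrix m n ℝ) : ℝ := sigMax A

/-- Condition number `κ(A) = σ_max(A)/σ_min(A)`. -/
def condNum {m n : Type*} [Fintype m] [Fintype n] (A : Matrix m n ℝ) : ℝ :=
  sigMax A / sigMin A

/-- Matrix exponential. -/
def matExp {d : ℕ} (A : Mat d) : Mat d := ∑' k : ℕ, ((k.factorial : ℝ))⁻¹ • A ^ k

/-- Column-wise vectorization: index `(j, i)` holds the `(i, j)` entry. -/
def vecM {d : ℕ} (A : Mat d) : Fin d × Fin d → ℝ := fun p => A p.2 p.1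

/-- Inverse of the column-wise vectorization. -/
def matM {d : ℕ} (v : Fin d × Fin d → ℝ) : Mat d := Matrix.of fun i j => v (j, i)

/-- The `d² × d²` diagonal 0/1 matrix `Low` with `Low (vec A) = vec (low A)`. -/
def lowOp (d : ℕ) : Matrix (Fin d × Fin d) (Fin d × Fin d) ℝ :=
  Matrix.diagonal fun p => if (p.1 : ℕ) < (p.2 : ℕ) then 1 else 0

/-- `P` is a valid `P_low` projector: `P Pᵀ = 1` and `Pᵀ P = Low`. -/
def IsPlow {d k : ℕ} (P : Matrix (Fin k) (Fin d × Fin d) ℝ) : Prop :=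
  P * Pᵀ = 1 ∧ Pᵀ * P = lowOp d

/-- Orthogonal matrix. -/
def IsOrtho {d : ℕ} (U : Mat d) : Prop := Uᵀ * U = 1

/-- Skew-symmetric matrix. -/
def IsSkew {d : ℕ} (X : Mat d) : Prop := Xᵀ = -X

/-- Matrix commutator. -/
def mcomm {d : ℕ} (A B : Mat d) : Mat d := A * B - B * A

/-- `U₀` is an exact joint triangularizer of the family `M`. -/
def ExactTriang {d N : ℕ} (U₀ : Mat d) (M : Fin N → Mat d) : Prop :=
  IsOrtho U₀ ∧ ∀ n, lowPart (U₀ᵀ * M n * U₀) = 0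

/-- The joint triangularization loss `L(U) = Σₙ ‖low(Uᵀ M̂ₙ U)‖²`. -/
def Loss {d N : ℕ} (Mh : Fin N → Mat d) (U : Mat d) : ℝ :=
  ∑ n, (frob (lowPart (Uᵀ * Mh n * U))) ^ 2

/-- Stationary point of the loss on the orthogonal group: the Riemannian
gradient vanishes, i.e. all directional derivatives along skew directions vanish. -/
def IsStationary' {d N : ℕ} (Mh : Fin N → Mat d) (U : Mat d) : Prop :=
  IsOrtho U ∧ ∀ X : Mat d, IsSkew X →
    deriv (fun t : ℝ => Loss Mh (U * matExp (t • X))) 0 = 0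

/-- The operator `t̃ = P_low (1 ⊗ Aᵀ − A ⊗ 1) P_lowᵀ`. -/
def ttil {d k : ℕ} (P : Matrix (Fin k) (Fin d × Fin d) ℝ) (A : Mat d) :
    Matrix (Fin k) (Fin k) ℝ :=
  P * ((1 : Mat d) ⊗ₖ Aᵀ - A ⊗ₖ (1 : Mat d)) * Pᵀ

/-- The joint eigengap `γ = min_{i<i'} Σₙ (Λ_{ni} − Λ_{ni'})²`. -/
def gapMin {d N : ℕ} (Λ : Fin N → Fin d → ℝ) : ℝ :=
  sInf {r | ∃ i i' : Fin d, i < i' ∧ r = ∑ n, (Λ n i - Λ n i') ^ 2}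

section EuclideanNorm

variable {m n p q : Type*} [Fintype m] [Fintype n] [Fintype p] [Fintype q]

-- `_root_.enorm` is the Euclidean norm above, not Mathlib's extended norm `ENorm.enorm`.
theorem enorm_eq_norm_toLp (v : m → ℝ) : _root_.enorm v = ‖WithLp.toLp 2 v‖ := by
  simp [_root_.enorm, EuclideanSpace.norm_eq]

theorem enorm_nonneg (v : m → ℝ) : 0 ≤ _root_.enorm v := Real.sqrt_nonneg _

theorem enorm_sq (v : m → ℝ) : _root_.enorm v ^ 2 = ∑ i, v i ^ 2 :=
  Real.sq_sqrt (by positivity)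

theorem enorm_eq_zero_iff {v : m → ℝ} : _root_.enorm v = 0 ↔ v = 0 := by
  simp [enorm_eq_norm_toLp]

theorem enorm_sq_eq_dotProduct (v : m → ℝ) : _root_.enorm v ^ 2 = v ⬝ᵥ v := by
  rw [enorm_eq_norm_toLp, ← real_inner_self_eq_norm_sq, EuclideanSpace.inner_toLp_toLp]
  simp

theorem dotProduct_le_enorm_mul_enorm (v w : m → ℝ) :
    v ⬝ᵥ w ≤ _root_.enorm v * _root_.enorm w := by
  simpa [enorm_eq_norm_toLp, EuclideanSpace.inner_toLp_toLp, dotProduct_comm] using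
    real_inner_le_norm (WithLp.toLp 2 v) (WithLp.toLp 2 w)

theorem exists_enorm_eq_one [Nonempty m] : ∃ v : m → ℝ, _root_.enorm v = 1 := by
  classical
  exact ⟨Pi.single (Classical.arbitrary m) 1, by simp [enorm_eq_norm_toLp]⟩

theorem enorm_vecM {d : ℕ} (X : Mat d) : _root_.enorm (vecM X) = frob X := by
  rw [_root_.enorm, frob, Fintype.sum_prod_type, Finset.sum_comm]
  rfl

theorem enorm_mulVec_of_transpose_mul_mulVec {Q : Matrix m n ℝ} {z : n → ℝ}
    (h : (Qᵀ * Q) *ᵥ z = z) : _root_.enorm (Q *ᵥ z) = _root_.enorm z := by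
  rw [← sq_eq_sq₀ (enorm_nonneg _) (enorm_nonneg _), enorm_sq_eq_dotProduct,
    enorm_sq_eq_dotProduct, dotProduct_mulVec, ← mulVec_transpose, mulVec_mulVec, h]

theorem frob_nonneg (A : Matrix m n ℝ) : 0 ≤ frob A := Real.sqrt_nonneg _

theorem frob_sq (A : Matrix m n ℝ) : frob A ^ 2 = ∑ i, ∑ j, A i j ^ 2 :=
  Real.sq_sqrt (by positivity)

theorem frob_transpose (A : Matrix m n ℝ) : frob Aᵀ = frob A := by
  rw [frob, frob, Finset.sum_comm]
  rfl

theorem frob_sq_eq_sum_enorm_sq (A : Matrix m n ℝ) :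
    frob A ^ 2 = ∑ j, _root_.enorm (Aᵀ j) ^ 2 := by
  simp only [frob_sq, enorm_sq]
  exact Finset.sum_comm

theorem enorm_mulVec_le_frob_mul (A : Matrix m n ℝ) (x : n → ℝ) :
    _root_.enorm (A *ᵥ x) ≤ frob A * _root_.enorm x := by
  rw [← sq_le_sq₀ (enorm_nonneg _) (mul_nonneg (frob_nonneg A) (enorm_nonneg x)), mul_pow,
    enorm_sq, enorm_sq, frob_sq, Finset.sum_mul]
  gcongr with i
  exact Finset.sum_mul_sq_le_sq_mul_sq _ _ _

theorem mul_frob_le_frob_mul {c : ℝ} (hc : 0 ≤ c) {M : Matrix m n ℝ}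
    (hM : ∀ v, c * _root_.enorm v ≤ _root_.enorm (M *ᵥ v)) (Z : Matrix n p ℝ) :
    c * frob Z ≤ frob (M * Z) := by
  rw [← sq_le_sq₀ (mul_nonneg hc (frob_nonneg Z)) (frob_nonneg _), mul_pow,
    frob_sq_eq_sum_enorm_sq, frob_sq_eq_sum_enorm_sq, Finset.mul_sum]
  gcongr with j
  have hcol : (M * Z)ᵀ j = M *ᵥ Zᵀ j := by
    ext i
    simp [Matrix.mul_apply, mulVec, dotProduct]
  rw [hcol, ← mul_pow]
  exact pow_le_pow_left₀ (mul_nonneg hc (enorm_nonneg _)) (hM _) 2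

theorem mul_mul_frob_le_frob_mul_mul {a b : ℝ} (ha : 0 ≤ a) (hb : 0 ≤ b) {M : Matrix m n ℝ}
    {N : Matrix p q ℝ} (hM : ∀ v, a * _root_.enorm v ≤ _root_.enorm (M *ᵥ v))
    (hN : ∀ v, b * _root_.enorm v ≤ _root_.enorm (Nᵀ *ᵥ v)) (Z : Matrix n p ℝ) :
    a * b * frob Z ≤ frob (M * Z * N) := by
  calc a * b * frob Z ≤ a * frob (Z * N) := by
        rw [mul_assoc, ← frob_transpose Z, ← frob_transpose (Z * N), transpose_mul]
        gcongr
        exact mul_frob_le_frob_mul hb hN _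
    _ ≤ frob (M * Z * N) := by
        rw [Matrix.mul_assoc]
        exact mul_frob_le_frob_mul ha hM _

end EuclideanNorm

section SingularValues

variable {m n : Type*} [Fintype m] [Fintype n]

def unitImageNorms (A : Matrix m n ℝ) : Set ℝ :=
  {r | ∃ x : n → ℝ, _root_.enorm x = 1 ∧ r = _root_.enorm (A *ᵥ x)}

theorem unitImageNorms_bddAbove (A : Matrix m n ℝ) : BddAbove (unitImageNorms A) :=
  ⟨frob A, by rintro _ ⟨x, hx, rfl⟩; simpa [hx] using enorm_mulVec_le_frob_mul A x⟩

theorem unitImageNorms_bddBelow (A : Matrix m n ℝ) : BddBelow (unitImageNorms A) :=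
  ⟨0, by rintro _ ⟨x, -, rfl⟩; exact enorm_nonneg _⟩

theorem div_mem_unitImageNorms (A : Matrix m n ℝ) {x : n → ℝ} (hx : x ≠ 0) :
    _root_.enorm (A *ᵥ x) / _root_.enorm x ∈ unitImageNorms A := by
  have hx' : ‖WithLp.toLp 2 x‖ ≠ 0 := by simpa [enorm_eq_norm_toLp] using hx
  refine ⟨(_root_.enorm x)⁻¹ • x, ?_, ?_⟩
  · simp [enorm_eq_norm_toLp, norm_smul, hx']
  · simp [mulVec_smul, enorm_eq_norm_toLp, norm_smul, div_eq_inv_mul]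

theorem enorm_mulVec_le_sigMax_mul (A : Matrix m n ℝ) (x : n → ℝ) :
    _root_.enorm (A *ᵥ x) ≤ sigMax A * _root_.enorm x := by
  rcases eq_or_ne x 0 with rfl | hx
  · simp [enorm_eq_norm_toLp]
  · have hpos : 0 < _root_.enorm x := (enorm_nonneg x).lt_of_ne' (mt enorm_eq_zero_iff.1 hx)
    rw [← div_le_iff₀ hpos]
    exact le_csSup (unitImageNorms_bddAbove A) (div_mem_unitImageNorms A hx)

theorem sigMin_mul_enorm_le (A : Matrix m n ℝ) (x : n → ℝ) :
    sigMin A * _root_.enorm x ≤ _root_.enorm (A *ᵥ x) := by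
  rcases eq_or_ne x 0 with rfl | hx
  · simp [enorm_eq_norm_toLp]
  · have hpos : 0 < _root_.enorm x := (enorm_nonneg x).lt_of_ne' (mt enorm_eq_zero_iff.1 hx)
    rw [← le_div_iff₀ hpos]
    exact csInf_le (unitImageNorms_bddBelow A) (div_mem_unitImageNorms A hx)

theorem sigMax_nonneg (A : Matrix m n ℝ) : 0 ≤ sigMax A :=
  Real.sSup_nonneg (by rintro _ ⟨x, -, rfl⟩; exact enorm_nonneg _)

theorem sigMin_nonneg (A : Matrix m n ℝ) : 0 ≤ sigMin A :=
  Real.sInf_nonneg (by rintro _ ⟨x, -, rfl⟩; exact enorm_nonneg _)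

theorem le_sigMin [Nonempty n] {A : Matrix m n ℝ} {c : ℝ}
    (h : ∀ x, c * _root_.enorm x ≤ _root_.enorm (A *ᵥ x)) : c ≤ sigMin A := by
  obtain ⟨e, he⟩ := exists_enorm_eq_one (m := n)
  refine le_csInf ⟨_, e, he, rfl⟩ ?_
  rintro _ ⟨x, hx, rfl⟩
  simpa [hx] using h x

theorem enorm_transpose_mulVec_le_sigMax_mul (A : Matrix m n ℝ) (x : m → ℝ) :
    _root_.enorm (Aᵀ *ᵥ x) ≤ sigMax A * _root_.enorm x := by
  set w := Aᵀ *ᵥ x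
  have hS := sigMax_nonneg A
  have key : _root_.enorm w ^ 2 ≤ sigMax A * _root_.enorm x * _root_.enorm w :=
    calc _root_.enorm w ^ 2 = x ⬝ᵥ (A *ᵥ w) := by
          rw [enorm_sq_eq_dotProduct, dotProduct_mulVec x A w, ← mulVec_transpose]
      _ ≤ _root_.enorm x * _root_.enorm (A *ᵥ w) := dotProduct_le_enorm_mul_enorm _ _
      _ ≤ _root_.enorm x * (sigMax A * _root_.enorm w) := by
          gcongr
          · exact enorm_nonneg x
          · exact enorm_mulVec_le_sigMax_mul A w
      _ = sigMax A * _root_.enorm x * _root_.enorm w := by ring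
  nlinarith [enorm_nonneg w, mul_nonneg hS (enorm_nonneg x)]

section RightInverse

variable [DecidableEq m]

theorem inv_mul_enorm_le_of_mul_eq_one {M : Matrix m n ℝ} {N : Matrix n m ℝ} {S : ℝ}
    (hM : ∀ w, _root_.enorm (M *ᵥ w) ≤ S * _root_.enorm w) (hMN : M * N = 1) (v : m → ℝ) :
    S⁻¹ * _root_.enorm v ≤ _root_.enorm (N *ᵥ v) := by
  rcases le_or_gt S 0 with hS | hS
  · exact (mul_nonpos_of_nonpos_of_nonneg (inv_nonpos.2 hS) (enorm_nonneg v)).trans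
      (enorm_nonneg _)
  · rw [inv_mul_le_iff₀ hS]
    calc _root_.enorm v = _root_.enorm (M *ᵥ (N *ᵥ v)) := by
          rw [mulVec_mulVec, hMN, one_mulVec]
      _ ≤ S * _root_.enorm (N *ᵥ v) := hM _

theorem sigMin_mul_enorm_le_transpose_mulVec {M : Matrix m n ℝ} {N : Matrix n m ℝ}
    (hMN : M * N = 1) (x : m → ℝ) : sigMin M * _root_.enorm x ≤ _root_.enorm (Mᵀ *ᵥ x) := by
  have hdual : _root_.enorm x ^ 2 ≤ _root_.enorm (Mᵀ *ᵥ x) * _root_.enorm (N *ᵥ x) :=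
    calc _root_.enorm x ^ 2 = (Mᵀ *ᵥ x) ⬝ᵥ (N *ᵥ x) := by
          rw [enorm_sq_eq_dotProduct, mulVec_transpose, ← dotProduct_mulVec, mulVec_mulVec, hMN,
            one_mulVec]
      _ ≤ _ := dotProduct_le_enorm_mul_enorm _ _
  have hN : sigMin M * _root_.enorm (N *ᵥ x) ≤ _root_.enorm x := by
    simpa [mulVec_mulVec, hMN] using sigMin_mul_enorm_le M (N *ᵥ x)
  rcases (enorm_nonneg x).eq_or_lt with h0 | hpos
  · rw [← h0, mul_zero]
    exact enorm_nonneg _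
  · nlinarith [mul_le_mul_of_nonneg_left hdual (sigMin_nonneg M),
      mul_le_mul_of_nonneg_left hN (enorm_nonneg (Mᵀ *ᵥ x))]

end RightInverse

section Square

variable [DecidableEq n] {M : Matrix n n ℝ}

theorem sigMax_pos [Nonempty n] (hM : IsUnit M) : 0 < sigMax M := by
  obtain ⟨e, he⟩ := exists_enorm_eq_one (m := n)
  have hMe : M *ᵥ e ≠ 0 := fun h0 => by
    have : e = 0 := Matrix.mulVec_injective_iff_isUnit.2 hM (by rw [h0, mulVec_zero])
    simp [this, enorm_eq_norm_toLp] at he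
  calc 0 < _root_.enorm (M *ᵥ e) := (enorm_nonneg _).lt_of_ne' (mt enorm_eq_zero_iff.1 hMe)
    _ ≤ sigMax M := by simpa [he] using enorm_mulVec_le_sigMax_mul M e

theorem sigMin_pos [Nonempty n] (hM : IsUnit M) : 0 < sigMin M :=
  (inv_pos.2 (sigMax_pos (M.isUnit_nonsing_inv_iff.2 hM))).trans_le <| le_sigMin <|
    inv_mul_enorm_le_of_mul_eq_one (enorm_mulVec_le_sigMax_mul _)
      (M.nonsing_inv_mul ((isUnit_iff_isUnit_det M).1 hM))

theorem isUnit_of_mul_enorm_le {c : ℝ} (hc : 0 < c)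
    (h : ∀ x, c * _root_.enorm x ≤ _root_.enorm (M *ᵥ x)) : IsUnit M := by
  refine Matrix.mulVec_injective_iff_isUnit.1 fun a b hab => ?_
  have hzero : _root_.enorm (a - b) ≤ 0 := by
    have := h (a - b)
    rw [mulVec_sub, hab, sub_self, enorm_eq_zero_iff.2 rfl] at this
    exact nonpos_of_mul_nonpos_right this hc
  exact sub_eq_zero.1 (enorm_eq_zero_iff.1 (hzero.antisymm (enorm_nonneg _)))

theorem mul_frob_le_frob_transpose_conj (hM : IsUnit M) (X : Matrix n n ℝ) :
    sigMin M * (sigMax M)⁻¹ * frob X ≤ frob (Mᵀ * X * M⁻¹ᵀ) := by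
  have hMinv := M.mul_nonsing_inv ((isUnit_iff_isUnit_det M).1 hM)
  exact mul_mul_frob_le_frob_mul_mul (sigMin_nonneg M) (inv_nonneg.2 (sigMax_nonneg M))
    (sigMin_mul_enorm_le_transpose_mulVec hMinv)
    (by simpa using inv_mul_enorm_le_of_mul_eq_one (enorm_mulVec_le_sigMax_mul M) hMinv) X

theorem mul_frob_le_frob_inv_transpose_conj (hM : IsUnit M) (Z : Matrix n n ℝ) :
    (sigMax M)⁻¹ * sigMin M * frob Z ≤ frob (M⁻¹ᵀ * Z * Mᵀ) := by
  have hMtinv : Mᵀ * M⁻¹ᵀ = 1 := by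
    rw [← transpose_mul, M.nonsing_inv_mul ((isUnit_iff_isUnit_det M).1 hM), transpose_one]
  exact mul_mul_frob_le_frob_mul_mul (inv_nonneg.2 (sigMax_nonneg M)) (sigMin_nonneg M)
    (inv_mul_enorm_le_of_mul_eq_one (enorm_transpose_mulVec_le_sigMax_mul M) hMtinv)
    (by simpa using sigMin_mul_enorm_le M) Z

end Square

end SingularValues

section Triangular

variable {n R : Type*} [LinearOrder n] [Ring R]

def IsStrictLower (X : Matrix n n R) : Prop := ∀ i j, i ≤ j → X i j = 0

namespace IsStrictLower

variable {X Y U : Matrix n n R}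

theorem transpose_mul [Fintype n] (hX : IsStrictLower X) (hU : U.BlockTriangular id) :
    IsStrictLower (Uᵀ * X) := fun i j hij => by
  rw [mul_apply]
  refine Finset.sum_eq_zero fun k _ => ?_
  rcases le_or_gt k j with hkj | hjk
  · rw [hX k j hkj, mul_zero]
  · rw [transpose_apply, hU (hij.trans_lt hjk), zero_mul]

theorem mul_transpose [Fintype n] (hX : IsStrictLower X) (hU : U.BlockTriangular id) :
    IsStrictLower (X * Uᵀ) := fun i j hij => by
  rw [mul_apply]
  refine Finset.sum_eq_zero fun k _ => ?_
  rcases le_or_gt i k with hik | hki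
  · rw [hX i k hik, zero_mul]
  · rw [transpose_apply, hU (hki.trans_le hij), mul_zero]

theorem sub (hX : IsStrictLower X) (hY : IsStrictLower Y) : IsStrictLower (X - Y) :=
  fun i j hij => by rw [Matrix.sub_apply, hX i j hij, hY i j hij, sub_zero]

end IsStrictLower

end Triangular

theorem blockTriangular_id_of_lowPart_eq_zero {d : ℕ} {A : Mat d} (h : lowPart A = 0) :
    A.BlockTriangular id := fun i j (hij : j < i) => by
  simpa [lowPart, hij] using congrFun (congrFun h i) j

section Vectorization

variable {d k : ℕ}

theorem vecM_matM (v : Fin d × Fin d → ℝ) : vecM (matM v) = v := rfl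

theorem kronecker_mulVec_vecM (B C X : Mat d) : (B ⊗ₖ C) *ᵥ vecM X = vecM (C * X * Bᵀ) := by
  ext ⟨a, b⟩
  simp only [mulVec, dotProduct, vecM, mul_apply, kroneckerMap_apply, transpose_apply,
    Fintype.sum_prod_type, Finset.sum_mul]
  exact Finset.sum_congr rfl fun _ _ => Finset.sum_congr rfl fun _ _ => by ring

theorem sylvester_mulVec_vecM (A X : Mat d) :
    ((1 : Mat d) ⊗ₖ Aᵀ - A ⊗ₖ (1 : Mat d)) *ᵥ vecM X = vecM (Aᵀ * X - X * Aᵀ) := by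
  rw [sub_mulVec, kronecker_mulVec_vecM, kronecker_mulVec_vecM]
  simp only [transpose_one, Matrix.mul_one, Matrix.one_mul]
  rfl

theorem lowOp_mulVec_eq_self_iff {v : Fin d × Fin d → ℝ} :
    lowOp d *ᵥ v = v ↔ IsStrictLower (matM v) := by
  simp only [lowOp, mulVec_diagonal, funext_iff, Prod.forall, IsStrictLower, matM, of_apply,
    Fin.val_fin_lt, ite_mul, one_mul, zero_mul, ite_eq_left_iff, not_lt, eq_comm (a := (0 : ℝ))]
  exact forall_comm

namespace IsPlow

variable {P : Matrix (Fin k) (Fin d × Fin d) ℝ}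

theorem enorm_transpose_mulVec (hP : IsPlow P) (y : Fin k → ℝ) :
    _root_.enorm (Pᵀ *ᵥ y) = _root_.enorm y :=
  enorm_mulVec_of_transpose_mul_mulVec (by rw [transpose_transpose, hP.1, one_mulVec])

theorem lowOp_mulVec_transpose_mulVec (hP : IsPlow P) (y : Fin k → ℝ) :
    lowOp d *ᵥ (Pᵀ *ᵥ y) = Pᵀ *ᵥ y := by
  rw [mulVec_mulVec, ← hP.2, Matrix.mul_assoc, hP.1, Matrix.mul_one]

theorem enorm_mulVec_vecM (hP : IsPlow P) {X : Mat d} (hX : IsStrictLower X) :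
    _root_.enorm (P *ᵥ vecM X) = frob X := by
  rw [enorm_mulVec_of_transpose_mul_mulVec (by rw [hP.2]; exact lowOp_mulVec_eq_self_iff.2 hX),
    enorm_vecM]

theorem isStrictLower_matM_transpose_mulVec (hP : IsPlow P) (y : Fin k → ℝ) :
    IsStrictLower (matM (Pᵀ *ᵥ y)) :=
  lowOp_mulVec_eq_self_iff.1 (hP.lowOp_mulVec_transpose_mulVec y)

theorem enorm_eq_frob_matM (hP : IsPlow P) (y : Fin k → ℝ) :
    _root_.enorm y = frob (matM (Pᵀ *ᵥ y)) := by
  rw [← enorm_vecM, vecM_matM, hP.enorm_transpose_mulVec]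

theorem enorm_ttil_mulVec (hP : IsPlow P) {A : Mat d} (hAu : lowPart A = 0) (y : Fin k → ℝ) :
    _root_.enorm (ttil P A *ᵥ y) =
      frob (Aᵀ * matM (Pᵀ *ᵥ y) - matM (Pᵀ *ᵥ y) * Aᵀ) := by
  have hAup := blockTriangular_id_of_lowPart_eq_zero hAu
  have hX := hP.isStrictLower_matM_transpose_mulVec y
  have hsyl := sylvester_mulVec_vecM A (matM (Pᵀ *ᵥ y))
  rw [vecM_matM] at hsyl
  rw [ttil, ← mulVec_mulVec, ← mulVec_mulVec, hsyl,
    hP.enorm_mulVec_vecM ((hX.transpose_mul hAup).sub (hX.mul_transpose hAup))]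

end IsPlow

end Vectorization

section Gap

variable {n : Type*} [LinearOrder n]

def minGap (μ : n → ℝ) : ℝ := sInf {r | ∃ i i' : n, i < i' ∧ r = |μ i - μ i'|}

theorem minGap_nonneg (μ : n → ℝ) : 0 ≤ minGap μ :=
  Real.sInf_nonneg (by rintro _ ⟨i, i', -, rfl⟩; exact abs_nonneg _)

theorem minGap_le_abs_sub (μ : n → ℝ) {i j : n} (h : i ≠ j) : minGap μ ≤ |μ i - μ j| := by
  have hbdd : BddBelow {r | ∃ i i' : n, i < i' ∧ r = |μ i - μ i'|} :=
    ⟨0, by rintro _ ⟨_, _, -, rfl⟩; exact abs_nonneg _⟩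
  rcases h.lt_or_gt with h | h
  · exact csInf_le hbdd ⟨i, j, h, rfl⟩
  · rw [abs_sub_comm]
    exact csInf_le hbdd ⟨j, i, h, rfl⟩

theorem minGap_pos [Finite n] [Nontrivial n] {μ : n → ℝ} (hμ : Function.Injective μ) :
    0 < minGap μ := by
  have hfin : {r | ∃ i i' : n, i < i' ∧ r = |μ i - μ i'|}.Finite :=
    (Set.finite_range fun p : n × n => |μ p.1 - μ p.2|).subset
      (by rintro _ ⟨i, i', -, rfl⟩; exact ⟨(i, i'), rfl⟩)
  obtain ⟨i, i', hlt⟩ := exists_pair_lt n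
  have hne : {r | ∃ i i' : n, i < i' ∧ r = |μ i - μ i'|}.Nonempty := ⟨_, i, i', hlt, rfl⟩
  obtain ⟨j, j', hj, heq⟩ := hne.csInf_mem hfin
  rw [minGap, heq]
  exact abs_pos.2 (sub_ne_zero.2 (hμ.ne hj.ne))

theorem minGap_of_subsingleton [Subsingleton n] (μ : n → ℝ) : minGap μ = 0 := by
  have hempty : {r | ∃ i i' : n, i < i' ∧ r = |μ i - μ i'|} = ∅ :=
    Set.eq_empty_iff_forall_notMem.2 fun _ ⟨i, i', h, _⟩ => h.ne (Subsingleton.elim i i')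
  rw [minGap, hempty, Real.sInf_empty]

theorem minGap_mul_frob_le_frob_commutator [Fintype n] [DecidableEq n] (μ : n → ℝ)
    {Y : Matrix n n ℝ} (hY : ∀ i, Y i i = 0) :
    minGap μ * frob Y ≤ frob (diagonal μ * Y - Y * diagonal μ) := by
  rw [← sq_le_sq₀ (mul_nonneg (minGap_nonneg μ) (frob_nonneg Y)) (frob_nonneg _), mul_pow,
    frob_sq, frob_sq, Finset.mul_sum]
  gcongr with i _ j
  rw [Finset.mul_sum]
  gcongr with j
  rw [Matrix.sub_apply, diagonal_mul, mul_diagonal,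
    show μ i * Y i j - Y i j * μ j = (μ i - μ j) * Y i j by ring, mul_pow]
  rcases eq_or_ne i j with rfl | hij
  · simp [hY]
  · refine mul_le_mul_of_nonneg_right ?_ (sq_nonneg _)
    rw [sq_le_sq, abs_of_nonneg (minGap_nonneg μ)]
    exact minGap_le_abs_sub μ hij

end Gap

theorem mul_enorm_le_enorm_ttil_mulVec {d k : ℕ} {A V : Mat d} {μ : Fin d → ℝ}
    {P : Matrix (Fin k) (Fin d × Fin d) ℝ} (hAu : lowPart A = 0) (hP : IsPlow P)
    (hV : IsUnit V) (hVu : lowPart V = 0) (hAV : A = V * diagonal μ * V⁻¹) (y : Fin k → ℝ) :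
    (sigMin V / sigMax V) ^ 2 * minGap μ * _root_.enorm y ≤ _root_.enorm (ttil P A *ᵥ y) := by
  set s := sigMin V
  set S := sigMax V
  set D := diagonal μ
  set X := matM (Pᵀ *ᵥ y)
  set Y := Vᵀ * X * V⁻¹ᵀ
  have hVup := blockTriangular_id_of_lowPart_eq_zero hVu
  have hVinvup : V⁻¹.BlockTriangular id := by
    let := hV.invertible
    exact blockTriangular_inv_of_blockTriangular hVup
  have hY : IsStrictLower Y :=
    ((hP.isStrictLower_matM_transpose_mulVec y).transpose_mul hVup).mul_transpose hVinvup
  have hconj : Aᵀ * X - X * Aᵀ = V⁻¹ᵀ * (D * Y - Y * D) * Vᵀ := by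
    have hinvtVt : V⁻¹ᵀ * Vᵀ = 1 := by
      rw [← transpose_mul, V.mul_nonsing_inv ((isUnit_iff_isUnit_det V).1 hV), transpose_one]
    have hAt : Aᵀ = V⁻¹ᵀ * D * Vᵀ := by
      rw [hAV, transpose_mul, transpose_mul, diagonal_transpose, Matrix.mul_assoc]
    simp only [Y, hAt, Matrix.mul_sub, Matrix.sub_mul, Matrix.mul_assoc]
    rw [hinvtVt, Matrix.mul_one, ← Matrix.mul_assoc V⁻¹ᵀ Vᵀ, hinvtVt, Matrix.one_mul]
  have hs := sigMin_nonneg V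
  have hS := inv_nonneg.2 (sigMax_nonneg V)
  rw [hP.enorm_ttil_mulVec hAu, hconj, hP.enorm_eq_frob_matM]
  calc (s / S) ^ 2 * minGap μ * frob X = S⁻¹ * s * (minGap μ * (s * S⁻¹ * frob X)) := by ring
    _ ≤ S⁻¹ * s * (minGap μ * frob Y) := by
        gcongr
        · exact minGap_nonneg μ
        · exact mul_frob_le_frob_transpose_conj hV X
    _ ≤ S⁻¹ * s * frob (D * Y - Y * D) := by
        gcongr
        exact minGap_mul_frob_le_frob_commutator μ fun i => hY i i le_rfl
    _ ≤ frob (V⁻¹ᵀ * (D * Y - Y * D) * Vᵀ) := mul_frob_le_frob_inv_transpose_conj hV _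

theorem pos_iff_two_le_of_two_mul_eq {d k : ℕ} (hk : 2 * k = d * (d - 1)) : 0 < k ↔ 2 ≤ d := by
  rcases Nat.lt_or_ge d 2 with hd | hd
  · interval_cases d <;> omega
  · have : 2 * 1 ≤ d * (d - 1) := Nat.mul_le_mul hd (by omega)
    omega

theorem TA_invertible_general {d k : ℕ} (hk : 2 * k = d * (d - 1))
    (A : Mat d) (hAu : lowPart A = 0)
    (hdist : ∀ i j : Fin d, i ≠ j → A i i ≠ A j j)
    (P : Matrix (Fin k) (Fin d × Fin d) ℝ) (hP : IsPlow P)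
    (V : Mat d) (hV : IsUnit V) (hVu : lowPart V = 0)
    (hAV : A = V * Matrix.diagonal (fun i => A i i) * V⁻¹) :
    IsUnit (P * ((1 : Mat d) ⊗ₖ Aᵀ - A ⊗ₖ (1 : Mat d)) * Pᵀ) ∧
    (sigMin V / sigMax V) ^ 2 *
        sInf {r | ∃ i i' : Fin d, i < i' ∧ r = |A i i - A i' i'|} ≤
      sigMin (P * ((1 : Mat d) ⊗ₖ Aᵀ - A ⊗ₖ (1 : Mat d)) * Pᵀ) := by
  change IsUnit (ttil P A) ∧ _ * minGap (fun i => A i i) ≤ sigMin (ttil P A)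
  have hbound := mul_enorm_le_enorm_ttil_mulVec hAu hP hV hVu hAV
  rcases isEmpty_or_nonempty (Fin k) with hk0 | hk0
  · have : Subsingleton (Fin d) := by
      rw [Fin.subsingleton_iff_le_one]
      have := mt (pos_iff_two_le_of_two_mul_eq hk).2 fun h => hk0.false ⟨0, h⟩
      omega
    rw [minGap_of_subsingleton, mul_zero]
    exact ⟨isUnit_of_subsingleton _, sigMin_nonneg _⟩
  · have : Nontrivial (Fin d) := Fin.nontrivial_iff_two_le.2 <|
      (pos_iff_two_le_of_two_mul_eq hk).1 (Fin.pos_iff_nonempty.2 hk0)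
    have hγ : 0 < minGap fun i => A i i :=
      minGap_pos fun i j hij => by_contra fun hne => hdist i j hne hij
    have hc : 0 < (sigMin V / sigMax V) ^ 2 * minGap fun i => A i i := by
      have := sigMin_pos hV
      have := sigMax_pos hV
      positivity
    exact ⟨isUnit_of_mul_enorm_le hc hbound, le_sigMin hbound⟩

/-- for an invertible upper-triangular `A` with distinct (real)
eigenvalues (its diagonal entries), the matrix
`T_A = P_low (1 ⊗ Aᵀ − A ⊗ 1) P_lowᵀ` is invertible, and its smallest singular
value is bounded below via any upper-triangular eigenvector matrix `V`. -/
theorem TA_invertible {d k : ℕ} (hk : 2 * k = d * (d - 1))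
    (A : Mat d) (hA : IsUnit A) (hAu : lowPart A = 0)
    (hdist : ∀ i j : Fin d, i ≠ j → A i i ≠ A j j)
    (P : Matrix (Fin k) (Fin d × Fin d) ℝ) (hP : IsPlow P)
    (V : Mat d) (hV : IsUnit V) (hVu : lowPart V = 0)
    (hAV : A = V * Matrix.diagonal (fun i => A i i) * V⁻¹) :
    IsUnit (P * ((1 : Mat d) ⊗ₖ Aᵀ - A ⊗ₖ (1 : Mat d)) * Pᵀ) ∧
    (sigMin V / sigMax V) ^ 2 *
        sInf {r | ∃ i i' : Fin d, i < i' ∧ r = |A i i - A i' i'|} ≤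
      sigMin (P * ((1 : Mat d) ⊗ₖ Aᵀ - A ⊗ₖ (1 : Mat d)) * Pᵀ) :=
  TA_invertible_general hk A hAu hdist P hP V hV hVu hAV
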